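/- Let x₀ ∈ ℝ, let ψ : (0,∞) → ℝ, and let α : (0,∞) → ℝ be differentiable and satisfy α'(t) = ψ(t) α(t) (1/t + α(t)²) − α(t)/t − α(t)³/2 for all t > 0. Define Q_{x₀}(x,t) = (π√t)^{−1} e^{−(x−x₀)²/(2t)} Φ(α(t)(x − x₀)), where Φ(u) = ∫_{−∞}^{u} e^{−s²/2} ds. Then Q_{x₀} satisfies ∂_t Q_{x₀}(x,t) = −∂_x [ ψ(t) (∂_x log Φ(α(t)(x − x₀))) Q_{x₀}(x,t) ] + (1/2) ∂_{xx} Q_{x₀}(x,t) for all x ∈ ℝ and t > 0. -/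

import Mathlib

/-- Unnormalized Gaussian cumulative integral: `Φ u = ∫_{-∞}^u e^{-s²/2} ds`. -/
noncomputable def Phi (u : ℝ) : ℝ := ∫ s in Set.Iic u, Real.exp (-s ^ 2 / 2)


lemma gauss_integrable : MeasureTheory.Integrable (fun s : ℝ => Real.exp (-s ^ 2 / 2)) := by
  have h := integrable_exp_neg_mul_sq (by norm_num : (0:ℝ) < 1/2)
  have he : (fun s : ℝ => Real.exp (-s ^ 2 / 2)) = fun s : ℝ => Real.exp (-(1/2) * s ^ 2) := by
    funext s; congr 1; ring
  rw [he]; exact h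

lemma Phi_pos (u : ℝ) : 0 < Phi u := by
  rw [Phi, MeasureTheory.setIntegral_pos_iff_support_of_nonneg_ae]
  · have hsupp : Function.support (fun s : ℝ => Real.exp (-s ^ 2 / 2)) = Set.univ := by
      ext s; simp [Real.exp_ne_zero]
    rw [hsupp, Set.univ_inter, Real.volume_Iic]
    simp
  · exact Filter.Eventually.of_forall fun s => (Real.exp_pos _).le
  · exact gauss_integrable.integrableOn

lemma hasDerivAt_Phi (u : ℝ) : HasDerivAt Phi (Real.exp (-u ^ 2 / 2)) u := by
  have hc : Continuous fun s : ℝ => Real.exp (-s ^ 2 / 2) := by continuity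
  have key : ∀ v : ℝ, Phi v = Phi 0 + ∫ s in (0:ℝ)..v, Real.exp (-s ^ 2 / 2) := by
    intro v
    have := intervalIntegral.integral_Iic_sub_Iic gauss_integrable.integrableOn
      gauss_integrable.integrableOn (μ := MeasureTheory.volume) (a := (0:ℝ)) (b := v)
    rw [Phi, Phi]; linarith [this]
  have hd : HasDerivAt (fun v => Phi 0 + ∫ s in (0:ℝ)..v, Real.exp (-s ^ 2 / 2))
      (Real.exp (-u ^ 2 / 2)) u := by
    apply HasDerivAt.const_add
    exact intervalIntegral.integral_hasDerivAt_right
      gauss_integrable.intervalIntegrable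
      hc.stronglyMeasurable.stronglyMeasurableAtFilter hc.continuousAt
  exact hd.congr_of_eventuallyEq (Filter.Eventually.of_forall key)

/-- Translated skew-Normal density of Remark 3.1:
`Q_{x₀}(x,t) = (π√t)⁻¹ e^{-(x-x₀)²/(2t)} Φ(α(t)(x-x₀))`. -/
noncomputable def Q (α : ℝ → ℝ) (x₀ t x : ℝ) : ℝ :=
  (Real.pi * Real.sqrt t)⁻¹ * Real.exp (-(x - x₀) ^ 2 / (2 * t)) * Phi (α t * (x - x₀))

/-- Remark 3.1: with the nonlinear drift centered at the initial condition `x₀`, and `ψ`,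
`α` linked by the compatibility ODE, the translated skew-Normal density `Q_{x₀}` solves
`∂_t Q_{x₀} = -∂_x [ψ(t) (∂_x log Φ(α(t)(x-x₀))) Q_{x₀}] + (1/2) ∂_{xx} Q_{x₀}`. -/
theorem stmt_11 (x₀ : ℝ) (ψ α : ℝ → ℝ)
    (hα : ∀ t > (0 : ℝ), DifferentiableAt ℝ α t)
    (hode : ∀ t > (0 : ℝ),
      deriv α t = ψ t * α t * (1 / t + (α t) ^ 2) - α t / t - (α t) ^ 3 / 2) :
    ∀ (x : ℝ), ∀ t > (0 : ℝ),
      deriv (fun τ => Q α x₀ τ x) t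
        = - deriv (fun y =>
              ψ t * deriv (fun z => Real.log (Phi (α t * (z - x₀)))) y * Q α x₀ t y) x
          + (1 / 2) * deriv (deriv (fun y => Q α x₀ t y)) x := by
  intro x t ht
  have hπ : Real.pi ≠ 0 := Real.pi_ne_zero
  have hs0 : 0 < Real.sqrt t := Real.sqrt_pos.mpr ht
  have hst : Real.sqrt t * Real.sqrt t = t := Real.mul_self_sqrt ht.le
  -- spatial derivative builders
  have hEy : ∀ y : ℝ, HasDerivAt (fun y => Real.exp (-(y - x₀) ^ 2 / (2 * t)))
      (Real.exp (-(y - x₀) ^ 2 / (2 * t)) * (-(y - x₀) / t)) y := by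
    intro y
    have h1 : HasDerivAt (fun y : ℝ => -(y - x₀) ^ 2 / (2 * t)) (-(y - x₀) / t) y := by
      have h := (((hasDerivAt_id y).sub_const x₀).pow 2).neg.div_const (2 * t)
      refine h.congr_deriv ?_
      simp only [id]
      field_simp
      ring
    exact h1.exp
  have hFy : ∀ y : ℝ, HasDerivAt (fun y => Phi (α t * (y - x₀)))
      (α t * Real.exp (-(α t * (y - x₀)) ^ 2 / 2)) y := by
    intro y
    have hin : HasDerivAt (fun y : ℝ => α t * (y - x₀)) (α t) y := by
      simpa using ((hasDerivAt_id y).sub_const x₀).const_mul (α t)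
    have h := (hasDerivAt_Phi (α t * (y - x₀))).comp y hin
    exact h.congr_deriv (mul_comm _ _)
  have hphiy : ∀ y : ℝ, HasDerivAt (fun y => Real.exp (-(α t * (y - x₀)) ^ 2 / 2))
      (Real.exp (-(α t * (y - x₀)) ^ 2 / 2) * (-((α t) ^ 2 * (y - x₀)))) y := by
    intro y
    have hin : HasDerivAt (fun y : ℝ => α t * (y - x₀)) (α t) y := by
      simpa using ((hasDerivAt_id y).sub_const x₀).const_mul (α t)
    have h1 : HasDerivAt (fun y : ℝ => -(α t * (y - x₀)) ^ 2 / 2)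
        (-((α t) ^ 2 * (y - x₀))) y := by
      have h := ((hin.pow 2).neg).div_const 2
      refine h.congr_deriv ?_
      ring
    exact h1.exp
  have hlin : HasDerivAt (fun y : ℝ => -(y - x₀) / t) (-1 / t) x := by
    have h := (((hasDerivAt_id x).sub_const x₀).neg).div_const t
    simpa using h
  -- Q as a clean product in space
  have hQfun : (fun y => Q α x₀ t y) = fun y =>
      (Real.pi * Real.sqrt t)⁻¹ *
        (Real.exp (-(y - x₀) ^ 2 / (2 * t)) * Phi (α t * (y - x₀))) := by
    funext y; rw [Q]; ring
  have hQy : ∀ y : ℝ, HasDerivAt (fun y => Q α x₀ t y)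
      ((Real.pi * Real.sqrt t)⁻¹ *
        (Real.exp (-(y - x₀) ^ 2 / (2 * t)) * (-(y - x₀) / t) * Phi (α t * (y - x₀))
          + Real.exp (-(y - x₀) ^ 2 / (2 * t)) *
            (α t * Real.exp (-(α t * (y - x₀)) ^ 2 / 2)))) y := by
    intro y
    rw [hQfun]
    exact ((hEy y).mul (hFy y)).const_mul _
  have hd1 : deriv (fun y => Q α x₀ t y) = fun y =>
      (Real.pi * Real.sqrt t)⁻¹ *
        (Real.exp (-(y - x₀) ^ 2 / (2 * t)) * (-(y - x₀) / t) * Phi (α t * (y - x₀))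
          + Real.exp (-(y - x₀) ^ 2 / (2 * t)) *
            (α t * Real.exp (-(α t * (y - x₀)) ^ 2 / 2))) :=
    funext fun y => (hQy y).deriv
  -- second spatial derivative at x
  have h2nd := ((((((hEy x).mul hlin).mul (hFy x)).add
      ((hEy x).mul ((hphiy x).const_mul (α t)))).const_mul
        ((Real.pi * Real.sqrt t)⁻¹)).deriv)
  -- drift function rewrite
  have hlog : ∀ y : ℝ, deriv (fun z => Real.log (Phi (α t * (z - x₀)))) y =
      (Phi (α t * (y - x₀)))⁻¹ * (α t * Real.exp (-(α t * (y - x₀)) ^ 2 / 2)) := by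
    intro y
    have h := ((Real.hasDerivAt_log (Phi_pos (α t * (y - x₀))).ne')).comp y (hFy y)
    exact h.deriv
  have hdriftfun : (fun y =>
      ψ t * deriv (fun z => Real.log (Phi (α t * (z - x₀)))) y * Q α x₀ t y)
      = fun y => (ψ t * α t * (Real.pi * Real.sqrt t)⁻¹) *
          (Real.exp (-(y - x₀) ^ 2 / (2 * t)) * Real.exp (-(α t * (y - x₀)) ^ 2 / 2)) := by
    funext y
    rw [hlog y, Q]
    have hF := (Phi_pos (α t * (y - x₀))).ne'
    field_simp
  have hdriv := (((hEy x).mul (hphiy x)).const_mul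
      (ψ t * α t * (Real.pi * Real.sqrt t)⁻¹)).deriv
  -- time derivative
  have h1t : HasDerivAt (fun τ => (Real.pi * Real.sqrt τ)⁻¹)
      (-((Real.pi * Real.sqrt t)⁻¹) / (2 * t)) t := by
    have hsq := (Real.hasDerivAt_sqrt ht.ne').const_mul Real.pi
    have h := hsq.inv (by positivity)
    refine h.congr_deriv ?_
    have key : (Real.pi * Real.sqrt t) ^ 2 = Real.pi ^ 2 * t := by
      rw [mul_pow, Real.sq_sqrt ht.le]
    rw [key]
    field_simp
  have h2t : HasDerivAt (fun τ => Real.exp (-(x - x₀) ^ 2 / (2 * τ)))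
      (Real.exp (-(x - x₀) ^ 2 / (2 * t)) * ((x - x₀) ^ 2 / (2 * t ^ 2))) t := by
    have hden : HasDerivAt (fun τ : ℝ => 2 * τ) 2 t := by
      simpa using (hasDerivAt_id t).const_mul 2
    have h := (hasDerivAt_const t (-(x - x₀) ^ 2)).div hden (by positivity)
    have h2 : HasDerivAt (fun τ : ℝ => -(x - x₀) ^ 2 / (2 * τ)) ((x - x₀) ^ 2 / (2 * t ^ 2)) t := by
      refine h.congr_deriv ?_
      field_simp
      ring
    exact h2.exp
  have h3t : HasDerivAt (fun τ => Phi (α τ * (x - x₀)))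
      (Real.exp (-(α t * (x - x₀)) ^ 2 / 2) * (deriv α t * (x - x₀))) t := by
    have hin : HasDerivAt (fun τ => α τ * (x - x₀)) (deriv α t * (x - x₀)) t :=
      ((hα t ht).hasDerivAt).mul_const (x - x₀)
    exact (hasDerivAt_Phi (α t * (x - x₀))).comp t hin
  have htime : deriv (fun τ => Q α x₀ τ x) t =
      (-((Real.pi * Real.sqrt t)⁻¹) / (2 * t) * Real.exp (-(x - x₀) ^ 2 / (2 * t))
          + (Real.pi * Real.sqrt t)⁻¹ *
            (Real.exp (-(x - x₀) ^ 2 / (2 * t)) * ((x - x₀) ^ 2 / (2 * t ^ 2)))) *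
          Phi (α t * (x - x₀))
        + (Real.pi * Real.sqrt t)⁻¹ * Real.exp (-(x - x₀) ^ 2 / (2 * t)) *
          (Real.exp (-(α t * (x - x₀)) ^ 2 / 2) * (deriv α t * (x - x₀))) := by
    have h : (fun τ => Q α x₀ τ x) = fun τ =>
        (Real.pi * Real.sqrt τ)⁻¹ * Real.exp (-(x - x₀) ^ 2 / (2 * τ)) *
          Phi (α τ * (x - x₀)) := by
      funext τ; rw [Q]
    rw [h]
    exact ((h1t.mul h2t).mul h3t).deriv
  -- assemble
  simp only [Pi.mul_apply, Pi.add_apply] at hdriv h2nd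
  rw [htime, hdriftfun, hdriv, hd1, h2nd, hode t ht]
  have hF := (Phi_pos (α t * (x - x₀))).ne'
  generalize (Real.pi * Real.sqrt t)⁻¹ = k
  field_simp
  ring
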